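/- arXiv:math/0701108 — 2 statements merged into one kernel-verified Lean document; each statement's English description precedes it below -/
import Mathlib

section
/- Let (m_n) be a sequence with m_n → ∞, and for each n let α̂_{n,1}, ..., α̂_{n,m_n} be independent with α̂_{n,j} ~ N(α_{n,j}, v_n), where v_n = n/(n_1 n_2). Suppose (n/√{m_n}) ∑_{j=1}^{m_n} α²_{n,j} → ∞. Then ∑_{j=1}^{m_n} α̂²_{n,j} = (1 + o_P(1)) ∑_{j=1}^{m_n} α²_{n,j} + m_n v_n, in the sense that (∑_j α̂²_{n,j} − m_n v_n)/(∑_j α²_{n,j}) → 1 in probability. -/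
/-! The squares `X_j²` of independent `X_j ~ N(α_j, v)` are independent with mean `α_j² + v`
and variance `4 α_j² v + 2 v²`, the Gaussian moments being read off from the derivatives at `0`
of the moment generating function `t ↦ exp (α_j t + v t² / 2)`. Chebyshev's inequality for
`∑ X_j²` therefore bounds the probability of a relative deviation `ε` from `A = ∑ α_j²` by
`(4 v A + 2 m v²) / (ε A)²`. Comparable sample sizes give `v n ≤ c₂ + 2 + 1/c₁` for
`n = n₁ + n₂`, so the bound is `O(1/T + 1/T²)` in the signal `T = n A / √m → ∞`. -/

open MeasureTheory ProbabilityTheory Real Set Finset Filter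
open scoped NNReal ENNReal Topology

lemma iteratedDeriv_succ_mul_exp_quadratic {a b : ℝ} {p p' q : ℝ → ℝ}
    (hp : ∀ t, HasDerivAt p (p' t) t) (hq : ∀ t, q t = p' t + (a + b * t) * p t) (n : ℕ) :
    iteratedDeriv (n + 1) (fun t ↦ p t * rexp (a * t + b * t ^ 2 / 2))
      = iteratedDeriv n (fun t ↦ q t * rexp (a * t + b * t ^ 2 / 2)) := by
  rw [iteratedDeriv_succ']
  congr 1
  funext t
  have he : HasDerivAt (fun t ↦ a * t + b * t ^ 2 / 2) (a + b * t) t :=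
    (((hasDerivAt_id' t).const_mul a).fun_add
      (((hasDerivAt_pow 2 t).const_mul b).div_const 2)).congr_deriv (by push_cast; ring)
  exact ((hp t).mul he.exp).deriv.trans (by rw [hq]; ring)

section GaussianMoments

variable {μ : ℝ} {v : ℝ≥0}

lemma integral_sq_gaussianReal : ∫ x, x ^ 2 ∂gaussianReal μ v = μ ^ 2 + v := by
  have h := variance_id_gaussianReal (μ := μ) (v := v)
  rw [variance_eq_sub (memLp_id_gaussianReal 2)] at h
  simp only [Pi.pow_apply, id_eq, integral_id_gaussianReal] at h
  linarith

lemma integral_pow_four_gaussianReal :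
    ∫ x, x ^ 4 ∂gaussianReal μ v = μ ^ 4 + 6 * μ ^ 2 * v + 3 * v ^ 2 := by
  have hmgf : mgf (fun x ↦ x) (gaussianReal μ v)
      = fun t ↦ 1 * rexp (μ * t + v * t ^ 2 / 2) := by
    simp [mgf_fun_id_gaussianReal]
  have ha : ∀ t : ℝ, HasDerivAt (fun t ↦ μ + v * t) v t := fun t ↦ by
    simpa using ((hasDerivAt_id t).const_mul (v : ℝ)).const_add μ
  have h2 : ∀ t : ℝ, HasDerivAt (fun t ↦ v + (μ + v * t) ^ 2) (2 * v * (μ + v * t)) t :=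
    fun t ↦ (((ha t).fun_pow 2).const_add (v : ℝ)).congr_deriv (by push_cast; ring)
  have h3 : ∀ t : ℝ, HasDerivAt (fun t ↦ 3 * v * (μ + v * t) + (μ + v * t) ^ 3)
      (3 * v ^ 2 + 3 * v * (μ + v * t) ^ 2) t :=
    fun t ↦ (((ha t).const_mul (3 * v : ℝ)).fun_add ((ha t).fun_pow 3)).congr_deriv
      (by push_cast; ring)
  calc ∫ x, x ^ 4 ∂gaussianReal μ v
        = iteratedDeriv 4 (mgf (fun x ↦ x) (gaussianReal μ v)) 0 := by
        rw [iteratedDeriv_mgf_zero (by simp)]; rfl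
    _ = iteratedDeriv 0 (fun t ↦ (3 * v ^ 2 + 6 * v * (μ + v * t) ^ 2 + (μ + v * t) ^ 4)
          * rexp (μ * t + v * t ^ 2 / 2)) 0 := by
        rw [hmgf, iteratedDeriv_succ_mul_exp_quadratic (fun t ↦ hasDerivAt_const t 1)
            (q := fun t ↦ μ + v * t) (fun t ↦ by ring),
          iteratedDeriv_succ_mul_exp_quadratic ha
            (q := fun t ↦ v + (μ + v * t) ^ 2) (fun t ↦ by ring),
          iteratedDeriv_succ_mul_exp_quadratic h2
            (q := fun t ↦ 3 * v * (μ + v * t) + (μ + v * t) ^ 3) (fun t ↦ by ring),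
          iteratedDeriv_succ_mul_exp_quadratic h3
            (q := fun t ↦ 3 * v ^ 2 + 6 * v * (μ + v * t) ^ 2 + (μ + v * t) ^ 4)
            (fun t ↦ by ring)]
    _ = μ ^ 4 + 6 * μ ^ 2 * v + 3 * v ^ 2 := by
        simp only [iteratedDeriv_zero, mul_zero, add_zero, zero_pow two_ne_zero, zero_div,
          exp_zero, mul_one]
        ring

lemma memLp_sq_gaussianReal : MemLp (fun x ↦ x ^ 2) 2 (gaussianReal μ v) := by
  refine (memLp_two_iff_integrable_sq (by fun_prop)).2 ?_
  simpa [← pow_mul] using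
    integrable_pow_of_mem_interior_integrableExpSet (X := fun x ↦ x) (μ := gaussianReal μ v)
      (by simp) 4

lemma variance_sq_gaussianReal :
    Var[fun x ↦ x ^ 2; gaussianReal μ v] = 4 * μ ^ 2 * v + 2 * v ^ 2 := by
  rw [variance_eq_sub memLp_sq_gaussianReal]
  simp only [Pi.pow_apply, ← pow_mul, integral_pow_four_gaussianReal, integral_sq_gaussianReal]
  ring

lemma ProbabilityTheory.HasLaw.memLp_sq_of_gaussianReal {Ω : Type*} [MeasurableSpace Ω]
    {P : Measure Ω} {Y : Ω → ℝ} (hY : HasLaw Y (gaussianReal μ v) P) :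
    MemLp (fun ω ↦ Y ω ^ 2) 2 P :=
  (memLp_map_measure_iff (g := fun x ↦ x ^ 2) (by fun_prop) hY.aemeasurable).1
    (hY.map_eq ▸ memLp_sq_gaussianReal)

end GaussianMoments

section SumOfSquares

variable {Ω ι : Type*} [MeasurableSpace Ω] {P : Measure Ω} [Fintype ι]
  {X : ι → Ω → ℝ} {α : ι → ℝ} {v : ℝ≥0}

lemma integral_sum_sq_of_hasLaw_gaussianReal [IsFiniteMeasure P]
    (hX : ∀ j, HasLaw (X j) (gaussianReal (α j) v) P) :
    P[fun ω ↦ ∑ j, X j ω ^ 2] = ∑ j, α j ^ 2 + Fintype.card ι * v := by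
  rw [integral_finsetSum _ fun j _ ↦ ((hX j).memLp_sq_of_gaussianReal).integrable one_le_two]
  have hE : ∀ j, ∫ ω, X j ω ^ 2 ∂P = α j ^ 2 + v := fun j ↦ by
    rw [← integral_sq_gaussianReal, ← (hX j).integral_comp (by fun_prop)]; rfl
  simp only [hE, Finset.sum_add_distrib, Finset.sum_const, Finset.card_univ, nsmul_eq_mul]

lemma variance_sum_sq_of_hasLaw_gaussianReal (hX : ∀ j, HasLaw (X j) (gaussianReal (α j) v) P)
    (hindep : iIndepFun X P) :
    Var[fun ω ↦ ∑ j, X j ω ^ 2; P] = 4 * v * ∑ j, α j ^ 2 + 2 * Fintype.card ι * v ^ 2 := by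
  have hsum : (fun ω ↦ ∑ j, X j ω ^ 2) = ∑ j, fun ω ↦ X j ω ^ 2 := by
    funext ω; simp only [Finset.sum_apply]
  rw [hsum, IndepFun.variance_sum (fun j _ ↦ (hX j).memLp_sq_of_gaussianReal)
    fun i _ j _ hij ↦ (hindep.indepFun hij).comp (measurable_id.pow_const 2)
      (measurable_id.pow_const 2)]
  have hV : ∀ j, Var[fun ω ↦ X j ω ^ 2; P] = 4 * v * α j ^ 2 + 2 * v ^ 2 := fun j ↦ by
    rw [mul_right_comm, ← variance_sq_gaussianReal, ← (hX j).map_eq,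
      variance_map (by fun_prop) (hX j).aemeasurable]; rfl
  simp only [hV, Finset.sum_add_distrib, Finset.mul_sum, Finset.sum_const, Finset.card_univ,
    nsmul_eq_mul]
  ring

lemma measure_abs_sum_sq_sub_div_sub_one_ge_le [IsFiniteMeasure P]
    (hX : ∀ j, HasLaw (X j) (gaussianReal (α j) v) P) (hindep : iIndepFun X P) {ε : ℝ}
    (hε : 0 < ε) (hα : 0 < ∑ j, α j ^ 2) :
    (P {ω | ε ≤ |(∑ j, X j ω ^ 2 - Fintype.card ι * v) / (∑ j, α j ^ 2) - 1|}).toReal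
      ≤ (4 * v * ∑ j, α j ^ 2 + 2 * Fintype.card ι * v ^ 2) / (ε * ∑ j, α j ^ 2) ^ 2 := by
  set A := ∑ j, α j ^ 2
  set S : Ω → ℝ := fun ω ↦ ∑ j, X j ω ^ 2
  have hS : MemLp S 2 P := memLp_finsetSum _ fun j _ ↦ (hX j).memLp_sq_of_gaussianReal
  have hset :
      {ω | ε ≤ |(S ω - Fintype.card ι * v) / A - 1|} = {ω | ε * A ≤ |S ω - P[S]|} := by
    ext ω
    rw [Set.mem_ofPred_eq, Set.mem_ofPred_eq, integral_sum_sq_of_hasLaw_gaussianReal hX,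
      ← le_div_iff₀ hα, ← abs_of_pos hα, ← abs_div, abs_of_pos hα]
    congr! 2
    field_simp
    ring
  rw [hset, ← variance_sum_sq_of_hasLaw_gaussianReal hX hindep]
  exact ENNReal.toReal_le_of_le_ofReal (div_nonneg (variance_nonneg _ _) (sq_nonneg _))
    (meas_ge_le_variance_div_sq hS (by positivity))

end SumOfSquares

lemma add_sq_div_mul_le {a b c₁ c₂ : ℝ} (ha : 0 < a) (hb : 0 < b) (hc₁ : 0 < c₁)
    (h₁ : c₁ ≤ a / b) (h₂ : a / b ≤ c₂) : (a + b) ^ 2 / (a * b) ≤ c₂ + 2 + c₁⁻¹ := by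
  have h : (a + b) ^ 2 / (a * b) = a / b + 2 + (a / b)⁻¹ := by
    field_simp
    ring
  linarith [inv_anti₀ hc₁ h₁]

lemma variance_bound_div_sq_le {V n A k C ε : ℝ} (hV : 0 ≤ V) (hn : 0 < n) (hVn : V * n ≤ C)
    (hk : 1 ≤ k) (hA : 0 < A) :
    (4 * V * A + 2 * k * V ^ 2) / (ε * A) ^ 2
      ≤ (4 * C / (n / √k * A) + 2 * C ^ 2 / (n / √k * A) ^ 2) / ε ^ 2 := by
  have hs : 1 ≤ √k := Real.one_le_sqrt.2 hk
  have h₁ : 4 * V / A ≤ 4 * C / (n / √k * A) := by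
    rw [div_le_div_iff₀ hA (by positivity)]
    have : V * (n / √k) ≤ C := (mul_le_mul_of_nonneg_left (div_le_self hn.le hs) hV).trans hVn
    nlinarith
  have h₂ : 2 * k * V ^ 2 / A ^ 2 = 2 * (V * n) ^ 2 / (n / √k * A) ^ 2 := by
    rw [div_mul_eq_mul_div, div_pow, Real.sq_sqrt (by linarith)]
    field_simp
  have h₃ : 2 * (V * n) ^ 2 / (n / √k * A) ^ 2 ≤ 2 * C ^ 2 / (n / √k * A) ^ 2 := by
    gcongr
  rw [mul_pow, ← div_div, div_right_comm]
  gcongr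
  calc (4 * V * A + 2 * k * V ^ 2) / A ^ 2 = 4 * V / A + 2 * k * V ^ 2 / A ^ 2 := by
        field_simp
    _ ≤ _ := by linarith

theorem sum_sq_gaussian_concentration_general
    {Ω : Type*} [MeasurableSpace Ω] (P : Measure Ω) [IsProbabilityMeasure P]
    (m n₁ n₂ : ℕ → ℕ) (c₁ c₂ : ℝ) (hc₁ : 0 < c₁)
    (hn₁ : ∀ N, 0 < n₁ N) (hn₂ : ∀ N, 0 < n₂ N)
    (hratio : ∀ N, c₁ ≤ (n₁ N : ℝ) / (n₂ N) ∧ (n₁ N : ℝ) / (n₂ N) ≤ c₂)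
    (α : (N : ℕ) → Fin (m N) → ℝ)
    (X : (N : ℕ) → Fin (m N) → Ω → ℝ)
    (hmeas : ∀ (N : ℕ) (j : Fin (m N)), Measurable (X N j))
    (hindep : ∀ N : ℕ, iIndepFun (X N) P)
    (hgauss : ∀ (N : ℕ) (j : Fin (m N)), Measure.map (X N j) P =
      gaussianReal (α N j) (((n₁ N : ℝ≥0) + n₂ N) / ((n₁ N : ℝ≥0) * n₂ N)))
    (hsignal : Tendsto (fun N : ℕ =>
      (((n₁ N : ℝ) + n₂ N) / Real.sqrt (m N)) * ∑ j, (α N j) ^ 2) atTop atTop) :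
    ∀ ε > (0 : ℝ),
      Tendsto (fun N : ℕ =>
        (P {ω | ε ≤ |(∑ j, (X N j ω) ^ 2 -
            (m N : ℝ) * (((n₁ N : ℝ) + n₂ N) / ((n₁ N : ℝ) * n₂ N))) /
          (∑ j, (α N j) ^ 2) - 1|}).toReal) atTop (𝓝 0) := by
  intro ε hε
  set C := c₂ + 2 + c₁⁻¹
  have hlim :
      Tendsto (fun T : ℝ ↦ (4 * C / T + 2 * C ^ 2 / T ^ 2) / ε ^ 2) atTop (𝓝 0) := by
    simpa using ((tendsto_const_nhds.div_atTop tendsto_id).add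
      (tendsto_const_nhds.div_atTop (tendsto_pow_atTop two_ne_zero))).div_const (ε ^ 2)
  refine squeeze_zero' (Eventually.of_forall fun N ↦ ENNReal.toReal_nonneg) ?_
    (hlim.comp hsignal)
  filter_upwards [hsignal.eventually_gt_atTop 0] with N hT
  have hn : (0 : ℝ) < n₁ N + n₂ N := by have := hn₁ N; positivity
  have hA : 0 < ∑ j, α N j ^ 2 := pos_of_mul_pos_right hT (by positivity)
  have hk : (1 : ℝ) ≤ m N := by
    have := (div_pos_iff_of_pos_left hn).1 (pos_of_mul_pos_left hT hA.le)
    exact Nat.one_le_cast.2 (Nat.cast_pos.1 (Real.sqrt_pos.1 this))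
  have hv : ((((n₁ N : ℝ≥0) + n₂ N) / ((n₁ N : ℝ≥0) * n₂ N) : ℝ≥0) : ℝ)
      = ((n₁ N : ℝ) + n₂ N) / ((n₁ N : ℝ) * n₂ N) := by
    push_cast; rfl
  have hvn : ((n₁ N : ℝ) + n₂ N) / ((n₁ N : ℝ) * n₂ N) * (n₁ N + n₂ N) ≤ C := by
    rw [div_mul_eq_mul_div, ← sq]
    exact add_sq_div_mul_le (by exact_mod_cast hn₁ N) (by exact_mod_cast hn₂ N) hc₁
      (hratio N).1 (hratio N).2
  have hcheb := measure_abs_sum_sq_sub_div_sub_one_ge_le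
    (fun j ↦ ⟨(hmeas N j).aemeasurable, hgauss N j⟩) (hindep N) hε hA
  rw [Fintype.card_fin, hv] at hcheb
  exact hcheb.trans (variance_bound_div_sq_le (by positivity) hn hvn hk hA)

/-- If `m_n → ∞`, the `α̂_{n,j} ~ N(α_{n,j}, v_n)` (`v_n = n/(n₁ n₂)`) are independent, the
sample sizes are comparable, and `(n/√m_n) ∑ α²_{n,j} → ∞`, then
`∑ α̂²_{n,j} = (1 + o_P(1)) ∑ α²_{n,j} + m_n v_n`, i.e.
`(∑ α̂²_{n,j} - m_n v_n)/∑ α²_{n,j} → 1` in probability. -/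
theorem sum_sq_gaussian_concentration
    {Ω : Type*} [MeasurableSpace Ω] (P : Measure Ω) [IsProbabilityMeasure P]
    (m n₁ n₂ : ℕ → ℕ) (c₁ c₂ : ℝ) (hc₁ : 0 < c₁) (hc₂ : 0 < c₂)
    (hn₁ : ∀ N, 0 < n₁ N) (hn₂ : ∀ N, 0 < n₂ N)
    (hratio : ∀ N, c₁ ≤ (n₁ N : ℝ) / (n₂ N) ∧ (n₁ N : ℝ) / (n₂ N) ≤ c₂)
    (hm : Tendsto m atTop atTop)
    (α : (N : ℕ) → Fin (m N) → ℝ)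
    (X : (N : ℕ) → Fin (m N) → Ω → ℝ)
    (hmeas : ∀ (N : ℕ) (j : Fin (m N)), Measurable (X N j))
    (hindep : ∀ N : ℕ, iIndepFun (X N) P)
    (hgauss : ∀ (N : ℕ) (j : Fin (m N)), Measure.map (X N j) P =
      gaussianReal (α N j) (((n₁ N : ℝ≥0) + n₂ N) / ((n₁ N : ℝ≥0) * n₂ N)))
    (hsignal : Tendsto (fun N : ℕ =>
      (((n₁ N : ℝ) + n₂ N) / Real.sqrt (m N)) * ∑ j, (α N j) ^ 2) atTop atTop) :
    ∀ ε > (0 : ℝ),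
      Tendsto (fun N : ℕ =>
        (P {ω | ε ≤ |(∑ j, (X N j ω) ^ 2 -
            (m N : ℝ) * (((n₁ N : ℝ) + n₂ N) / ((n₁ N : ℝ) * n₂ N))) /
          (∑ j, (α N j) ^ 2) - 1|}).toReal) atTop (𝓝 0) :=
  sum_sq_gaussian_concentration_general P m n₁ n₂ c₁ c₂ hc₁ hn₁ hn₂ hratio α X hmeas hindep hgauss
    hsignal
end

section
/- Let α̂_j ~ N(α_j, n/(n_1 n_2)) independently for j ∈ A^c, where |A^c| = p − m, max_{j ∈ A^c} |α_j| < b_n, and log(p − m)/[n(b_n − max_{j ∈ A^c}|α_j|)²] → 0 with n_1 n_2/n ≍ n. Then ∑_{j ∈ A^c} α²_j · P(|α̂_j| ≥ b_n) → 0 as n, p → ∞, provided max_{j ∈ A^c} α²_j is bounded. -/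
open MeasureTheory ProbabilityTheory Real Set Finset Filter
open scoped NNReal ENNReal Topology

/-!
Each `α̂_j` is Gaussian with variance `n / (n₁ n₂) ≤ C / n`, where `C = c₂ + 2 + c₁⁻¹` bounds
`n² / (n₁ n₂) = n₁/n₂ + 2 + n₂/n₁`. The sub-Gaussian Chernoff bound on both tails, shifted by
`a = max_j |α_j|`, gives `P(|α̂_j| ≥ b) ≤ 2 exp (-D / (2C))` with `D = n (b - a)²`, so the sum is at
most `2 B (p - m) exp (-D / (2C))`. Since `log (p - m) / D → 0`, eventually
`D / (2C) ≥ 2 log (p - m)` and the bound is at most `2 B / (p - m) → 0`.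
-/

lemma ProbabilityTheory.HasSubgaussianMGF.mono {Ω : Type*} {mΩ : MeasurableSpace Ω}
    {μ : Measure Ω} {X : Ω → ℝ} {c c' : ℝ≥0} (h : HasSubgaussianMGF X c μ) (hc : c ≤ c') :
    HasSubgaussianMGF X c' μ where
  integrable_exp_mul := h.integrable_exp_mul
  mgf_le t := (h.mgf_le t).trans (by gcongr)

lemma hasSubgaussianMGF_id_gaussianReal (v : ℝ≥0) :
    HasSubgaussianMGF id v (gaussianReal 0 v) where
  integrable_exp_mul := integrable_exp_mul_gaussianReal
  mgf_le t := by simp [mgf_id_gaussianReal]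

lemma hasSubgaussianMGF_sub_gaussianReal (μ : ℝ) (v : ℝ≥0) :
    HasSubgaussianMGF (fun x => x - μ) v (gaussianReal μ v) := by
  rw [← HasSubgaussianMGF.id_map_iff (by fun_prop), gaussianReal_map_sub_const, sub_self]
  exact hasSubgaussianMGF_id_gaussianReal v

lemma gaussianReal_real_abs_ge_le {μ a b s : ℝ} {v : ℝ≥0} (hvs : (v : ℝ) ≤ s) (hμ : |μ| ≤ a)
    (hab : a ≤ b) : (gaussianReal μ v).real {x | b ≤ |x|} ≤ 2 * exp (-(b - a) ^ 2 / (2 * s)) := by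
  lift s to ℝ≥0 using v.coe_nonneg.trans hvs
  have hX := (hasSubgaussianMGF_sub_gaussianReal μ v).mono (NNReal.coe_le_coe.1 hvs)
  obtain ⟨hμa, hμa'⟩ := abs_le.1 hμ
  have hexp : ∀ ε, b - a ≤ ε → exp (-ε ^ 2 / (2 * s)) ≤ exp (-(b - a) ^ 2 / (2 * s)) :=
    fun ε hε => by gcongr
  have hsplit : {x : ℝ | b ≤ |x|} ⊆ {x | b - μ ≤ x - μ} ∪ {x | b + μ ≤ (-fun x => x - μ) x} := by
    intro x (hx : b ≤ |x|)
    rcases le_abs'.1 hx with h | h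
    · right; show b + μ ≤ -(x - μ); linarith
    · left; show b - μ ≤ x - μ; linarith
  calc (gaussianReal μ v).real {x | b ≤ |x|}
      ≤ (gaussianReal μ v).real {x | b - μ ≤ x - μ}
        + (gaussianReal μ v).real {x | b + μ ≤ (-fun x => x - μ) x} :=
        (measureReal_mono hsplit).trans (measureReal_union_le _ _)
    _ ≤ exp (-(b - a) ^ 2 / (2 * s)) + exp (-(b - a) ^ 2 / (2 * s)) := by
        gcongr
        · exact (hX.measure_ge_le (by linarith)).trans (hexp _ (by linarith))
        · exact (hX.neg.measure_ge_le (by linarith)).trans (hexp _ (by linarith))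
    _ = 2 * exp (-(b - a) ^ 2 / (2 * s)) := by ring

lemma sum_sq_mul_gaussianReal_abs_ge_le {ι : Type*} [Fintype ι] (α : ι → ℝ) {v : ℝ≥0}
    {s a b B : ℝ} (hvs : (v : ℝ) ≤ s) (hα : ∀ j, |α j| ≤ a) (hab : a ≤ b) (hB : ∀ j, α j ^ 2 ≤ B) :
    ∑ j, α j ^ 2 * (gaussianReal (α j) v).real {x | b ≤ |x|}
      ≤ 2 * B * (Fintype.card ι * exp (-(b - a) ^ 2 / (2 * s))) := by
  have hterm : ∀ j, α j ^ 2 * (gaussianReal (α j) v).real {x | b ≤ |x|}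
      ≤ 2 * B * exp (-(b - a) ^ 2 / (2 * s)) := fun j => by
    have hB₀ : 0 ≤ B := (sq_nonneg _).trans (hB j)
    calc _ ≤ B * (2 * exp (-(b - a) ^ 2 / (2 * s))) :=
          mul_le_mul (hB j) (gaussianReal_real_abs_ge_le hvs (hα j) hab) measureReal_nonneg hB₀
      _ = _ := by ring
  calc _ ≤ ∑ _j : ι, 2 * B * exp (-(b - a) ^ 2 / (2 * s)) := Finset.sum_le_sum fun j _ => hterm j
    _ = _ := by rw [Finset.sum_const, Finset.card_univ, nsmul_eq_mul]; ring

lemma add_div_mul_le_of_div_mem_Icc {x y c₁ c₂ : ℝ} (hx : 0 < x) (hy : 0 < y) (hc₁ : 0 < c₁)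
    (h₁ : c₁ ≤ x / y) (h₂ : x / y ≤ c₂) :
    (x + y) / (x * y) ≤ (c₂ + 2 + c₁⁻¹) / (x + y) := by
  have hsplit : (x + y) / (x * y) * (x + y) = x / y + 2 + (x / y)⁻¹ := by
    field_simp
    ring
  have hinv : (x / y)⁻¹ ≤ c₁⁻¹ := inv_anti₀ hc₁ h₁
  rw [le_div_iff₀ (by positivity), hsplit]
  linarith

lemma tendsto_mul_exp_neg_mul_of_log_div_tendsto_zero {ι : Type*} {l : Filter ι}
    {k D : ι → ℝ} {κ : ℝ} (hκ : 0 < κ) (hk : Tendsto k l atTop) (hD : ∀ᶠ i in l, 0 < D i)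
    (hlog : Tendsto (fun i => log (k i) / D i) l (𝓝 0)) :
    Tendsto (fun i => k i * exp (-(κ * D i))) l (𝓝 0) := by
  refine squeeze_zero' ?_ ?_ (tendsto_inv_atTop_zero.comp hk)
  · filter_upwards [hk.eventually_ge_atTop 0] with i hi
    positivity
  filter_upwards [hk.eventually_gt_atTop 0, hD, hlog.eventually (gt_mem_nhds (half_pos hκ))]
    with i hki hDi hlogi
  have hlogk : 2 * log (k i) ≤ κ * D i := by
    rw [div_lt_iff₀ hDi] at hlogi
    linarith
  calc k i * exp (-(κ * D i)) ≤ k i * exp (-(2 * log (k i))) := by gcongr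
    _ = (k i)⁻¹ := by
        rw [show -(2 * log (k i)) = -log (k i) + -log (k i) by ring, exp_add, exp_neg,
          exp_log hki]
        field_simp

theorem noise_coordinates_tail_sum_vanishes_general
    (p m n₁ n₂ : ℕ → ℕ) (c₁ c₂ : ℝ) (hc₁ : 0 < c₁)
    (hn₁ : ∀ N, 0 < n₁ N) (hn₂ : ∀ N, 0 < n₂ N)
    (hratio : ∀ N, c₁ ≤ (n₁ N : ℝ) / (n₂ N) ∧ (n₁ N : ℝ) / (n₂ N) ≤ c₂)
    (hpmgrow : Tendsto (fun N => p N - m N) atTop atTop)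
    (α : (N : ℕ) → Fin (p N - m N) → ℝ) (b : ℕ → ℝ)
    (hmax : ∀ N, (⨆ j, |α N j|) < b N)
    (hlog : Tendsto (fun N => Real.log ((p N - m N : ℕ) : ℝ) /
      (((n₁ N + n₂ N : ℕ) : ℝ) * (b N - ⨆ j, |α N j|) ^ 2)) atTop (𝓝 0))
    (hbdd : ∃ B : ℝ, ∀ (N : ℕ) (j : Fin (p N - m N)), (α N j) ^ 2 ≤ B) :
    Tendsto (fun N => ∑ j, (α N j) ^ 2 *
        ((gaussianReal (α N j) (((n₁ N : ℝ≥0) + n₂ N) / ((n₁ N : ℝ≥0) * n₂ N)))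
          {x | b N ≤ |x|}).toReal)
      atTop (𝓝 0) := by
  obtain ⟨B, hB⟩ := hbdd
  set C := c₂ + 2 + c₁⁻¹
  have hC : 0 < C := by
    obtain ⟨h₁, h₂⟩ := hratio 0
    have : 0 < c₂ := hc₁.trans_le (h₁.trans h₂)
    positivity
  set D := fun N => ((n₁ N + n₂ N : ℕ) : ℝ) * (b N - ⨆ j, |α N j|) ^ 2
  have hbound : ∀ N, ∑ j, (α N j) ^ 2 *
        ((gaussianReal (α N j) (((n₁ N : ℝ≥0) + n₂ N) / ((n₁ N : ℝ≥0) * n₂ N)))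
          {x | b N ≤ |x|}).toReal
      ≤ 2 * B * (((p N - m N : ℕ) : ℝ) * exp (-((2 * C)⁻¹ * D N))) := fun N => by
    have hvar : ((((n₁ N : ℝ≥0) + n₂ N) / ((n₁ N : ℝ≥0) * n₂ N) : ℝ≥0) : ℝ)
        ≤ C / ((n₁ N + n₂ N : ℕ) : ℝ) := by
      push_cast
      exact add_div_mul_le_of_div_mem_Icc (Nat.cast_pos.2 (hn₁ N)) (Nat.cast_pos.2 (hn₂ N)) hc₁
        (hratio N).1 (hratio N).2
    refine (sum_sq_mul_gaussianReal_abs_ge_le (α N) hvar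
      (fun j => le_ciSup (f := fun j => |α N j|) (Set.finite_range _).bddAbove j)
      (hmax N).le (hB N)).trans_eq ?_
    simp only [Fintype.card_fin, D]
    field_simp
  have hD : ∀ N, 0 < D N := fun N => by
    have := hn₁ N
    have := sub_pos.2 (hmax N)
    positivity
  have hlim := tendsto_mul_exp_neg_mul_of_log_div_tendsto_zero (inv_pos.2 (mul_pos two_pos hC))
    (tendsto_natCast_atTop_atTop.comp hpmgrow) (.of_forall hD) hlog
  exact squeeze_zero (fun N => Finset.sum_nonneg fun j _ => by positivity) hbound
    (by simpa using hlim.const_mul (2 * B))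

/-- For independent `α̂_j ~ N(α_j, n/(n₁n₂))`, `j ∈ Aᶜ` with `|Aᶜ| = p - m`, if
`max_{j ∈ Aᶜ} |α_j| < b_n`, `log(p - m)/[n (b_n - max_j |α_j|)²] → 0`, and
`max_j α²_j` is bounded, then `∑_{j ∈ Aᶜ} α²_j P(|α̂_j| ≥ b_n) → 0` as `n, p → ∞`. -/
theorem noise_coordinates_tail_sum_vanishes
    (p m n₁ n₂ : ℕ → ℕ) (c₁ c₂ : ℝ) (hc₁ : 0 < c₁) (hc₂ : 0 < c₂)
    (hn₁ : ∀ N, 0 < n₁ N) (hn₂ : ∀ N, 0 < n₂ N)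
    (hratio : ∀ N, c₁ ≤ (n₁ N : ℝ) / (n₂ N) ∧ (n₁ N : ℝ) / (n₂ N) ≤ c₂)
    (hngrow : Tendsto (fun N => n₁ N + n₂ N) atTop atTop)
    (hpm : ∀ N, m N < p N)
    (hpmgrow : Tendsto (fun N => p N - m N) atTop atTop)
    (α : (N : ℕ) → Fin (p N - m N) → ℝ) (b : ℕ → ℝ)
    (hmax : ∀ N, (⨆ j, |α N j|) < b N)
    (hlog : Tendsto (fun N => Real.log ((p N - m N : ℕ) : ℝ) /
      (((n₁ N + n₂ N : ℕ) : ℝ) * (b N - ⨆ j, |α N j|) ^ 2)) atTop (𝓝 0))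
    (hbdd : ∃ B : ℝ, ∀ (N : ℕ) (j : Fin (p N - m N)), (α N j) ^ 2 ≤ B) :
    Tendsto (fun N => ∑ j, (α N j) ^ 2 *
        ((gaussianReal (α N j) (((n₁ N : ℝ≥0) + n₂ N) / ((n₁ N : ℝ≥0) * n₂ N)))
          {x | b N ≤ |x|}).toReal)
      atTop (𝓝 0) :=
  noise_coordinates_tail_sum_vanishes_general p m n₁ n₂ c₁ c₂ hc₁ hn₁ hn₂ hratio hpmgrow α b hmax
    hlog hbdd
end
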